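/- arXiv:1412.5350 — 2 statements merged into one kernel-verified Lean document; each statement's English description precedes it below -/
import Mathlib

section
/- Let w ⊆ ℝ^d be a strongly martingale connected closed set. Then for every locally concave function G : w → ℝ ∪ {+∞}, the infimum of G over w equals the infimum of G over the fixed boundary: inf_{x ∈ w} G(x) = inf_{x ∈ ∂_fixed w} G(x). -/
open Set MeasureTheory
open scoped ENNReal

noncomputable section

/-- `Euc d` is the Euclidean space `ℝ^d`. -/
abbrev Euc (d : ℕ) := EuclideanSpace ℝ (Fin d)

/-- The fixed boundary of `w`: the set of locally extremal points of `w`,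
i.e. the points of `∂w` that do not lie on any open segment contained in `cl w`. -/
def fixedBoundary {d : ℕ} (w : Set (Euc d)) : Set (Euc d) :=
  {x | x ∈ frontier w ∧ ∀ y z : Euc d, y ≠ z → openSegment ℝ y z ⊆ closure w →
      x ∉ openSegment ℝ y z}

/-- The free boundary of `w`. -/
def freeBoundary {d : ℕ} (w : Set (Euc d)) : Set (Euc d) := frontier w \ fixedBoundary w

/-- A function `G : w → ℝ ∪ {+∞}` is locally concave on `w` if its restriction to every
segment contained in `w` is concave. -/
def LocallyConcaveOn {d : ℕ} (w : Set (Euc d)) (G : Euc d → EReal) : Prop :=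
  ∀ x ∈ w, ∀ y ∈ w, segment ℝ x y ⊆ w → ∀ a b : ℝ, 0 ≤ a → 0 ≤ b → a + b = 1 →
    (a : EReal) * G x + (b : EReal) * G y ≤ G (a • x + b • y)

/-- The class `Λ_{w,f}` of locally concave functions on `w` majorizing `f` on the
fixed boundary of `w`. -/
def Lambda {d : ℕ} (w : Set (Euc d)) (f : Euc d → EReal) : Set (Euc d → EReal) :=
  {G | LocallyConcaveOn w G ∧ ∀ x ∈ fixedBoundary w, f x ≤ G x}

/-- The minimal locally concave function `𝔅_{w,f}`, the pointwise infimum of `Λ_{w,f}`. -/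
def minLocConc {d : ℕ} (w : Set (Euc d)) (f : Euc d → EReal) (x : Euc d) : EReal :=
  ⨅ G ∈ Lambda w f, G x

/-- A point `x` is an exposed point of a set `C ⊆ ℝ^d` if there is an affine
hyperplane whose intersection with `C` is exactly `{x}`. -/
def IsExposedPoint {d : ℕ} (C : Set (Euc d)) (x : Euc d) : Prop :=
  ∃ (a : Euc d) (c : ℝ), a ≠ 0 ∧ {y : Euc d | inner ℝ a y = c} ∩ C = {x}

/-- A convex set is strictly convex if every point of its boundary is an exposed point
of its closure. -/
def StrictlyConvexSet {d : ℕ} (C : Set (Euc d)) : Prop :=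
  Convex ℝ C ∧ ∀ x ∈ frontier C, IsExposedPoint (closure C) x

/-- The nonnegative part of an extended real, as an `ℝ≥0∞`-valued quantity. -/
def erealToENNReal (y : EReal) : ℝ≥0∞ := if y = ⊤ then ⊤ else ENNReal.ofReal y.toReal

/-- Expectation of an `EReal`-valued random variable: the difference of the (unsigned)
integrals of its positive and negative parts. -/
def erealExp {α : Type} [MeasurableSpace α] (μ : MeasureTheory.Measure α)
    (Y : α → EReal) : EReal :=
  ((∫⁻ a, erealToENNReal (Y a) ∂μ : ℝ≥0∞) : EReal) -
    ((∫⁻ a, erealToENNReal (-(Y a)) ∂μ : ℝ≥0∞) : EReal)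

open MeasureTheory in
/-- The data `(μ, F, M, M∞)` is a `w`-martingale: `μ` is a probability measure, each `F n`
is a finite σ-algebra, `F 0` is trivial, `M n` is `F n`-measurable, `M∞` is integrable with
values in the fixed boundary of `w`, `M n = E(M∞ | F n)`, and for every `n` and every atom
`σ` of `F n`, the convex hull of `M_n(σ)` together with `{M_{n+1}(z) : z ∈ σ}` lies in `w`. -/
def IsWMart {d : ℕ} {α : Type} [mα : MeasurableSpace α] (μ : Measure α)
    (F : Filtration ℕ mα) (M : ℕ → α → Euc d) (Minf : α → Euc d)
    (w : Set (Euc d)) : Prop :=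
  IsProbabilityMeasure μ ∧
  (∀ n, {s : Set α | MeasurableSet[F n] s}.Finite) ∧
  ((F 0 : MeasurableSpace α) = ⊥) ∧
  (∀ n, Measurable[F n] (M n)) ∧
  Integrable Minf μ ∧
  (∀ a, Minf a ∈ fixedBoundary w) ∧
  (∀ n, M n =ᵐ[μ] μ[Minf | F n]) ∧
  (∀ n (σ : Set α), MeasurableSet[F n] σ → σ.Nonempty →
    (∀ t : Set α, MeasurableSet[F n] t → t ⊆ σ → t = ∅ ∨ t = σ) →
    ∀ a ∈ σ, convexHull ℝ ({M n a} ∪ (M (n+1)) '' σ) ⊆ w)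

/-- A bundled `w`-martingale. -/
structure WMartingale {d : ℕ} (w : Set (Euc d)) : Type 1 where
  α : Type
  mα : MeasurableSpace α
  μ : @MeasureTheory.Measure α mα
  F : @MeasureTheory.Filtration α ℕ _ mα
  M : ℕ → α → Euc d
  Minf : α → Euc d
  isWMart : @IsWMart d α mα μ F M Minf w

/-- A `w`-martingale is simple if `M n = M∞` for some `n`; it starts at `x` if `M 0 ≡ x`.
The set `w` is strongly martingale connected if every `x ∈ w` is the start of a simple
`w`-martingale. -/
def StronglyMartingaleConnected {d : ℕ} (w : Set (Euc d)) : Prop :=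
  ∀ x ∈ w, ∃ X : WMartingale w, (∃ n, X.M n = X.Minf) ∧ (∀ a, X.M 0 a = x)

/-- The martingale Bellman function `ℬ_{w,f}(x) = sup {E f(M∞) : M₀ = x, M ∈ 𝓜_w}`. -/
def martBellman {d : ℕ} (w : Set (Euc d)) (f : Euc d → ℝ) (x : Euc d) : EReal :=
  ⨆ (X : WMartingale w) (_ : ∀ a, X.M 0 a = x),
    @erealExp X.α X.mα X.μ (fun a => ((f (X.Minf a) : ℝ) : EReal))

/-!
Let `M` be a simple `w`-martingale started at `x ∈ w`. On an atom `σ` of positive measure of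
`S_k`, the constant value of `M_k` is the average of `M_{k+1}` over `σ`, i.e. the centre of mass
of the finitely many values of `M_{k+1}` on `σ` weighted by the measures of their fibres. These
values lie in a convex subset of `w`, on which a locally concave `G` is quasiconcave, so some
value of positive weight satisfies `G(M_{k+1}) ≤ G(M_k)`. Iterating up to the time `n` with
`M_n = M_∞` gives a point of the fixed boundary at which `G ≤ G(x)`.
-/

open Finset in
theorem QuasiconcaveOn.exists_le_of_centerMass {E β ι : Type*} [AddCommGroup E] [Module ℝ E]
    [LinearOrder β] {s : Set E} {f : E → β} (hf : QuasiconcaveOn ℝ s f) {t : Finset ι}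
    {w : ι → ℝ} {p : ι → E} (hw₀ : ∀ i ∈ t, 0 ≤ w i) (hw₁ : 0 < ∑ i ∈ t, w i)
    (hp : ∀ i ∈ t, p i ∈ s) :
    ∃ i ∈ t, 0 < w i ∧ f (p i) ≤ f (t.centerMass w p) := by
  classical
  set t' := {i ∈ t | w i ≠ 0}
  have ht' : t'.Nonempty := nonempty_of_sum_ne_zero (by rw [sum_filter_ne_zero]; exact hw₁.ne')
  obtain ⟨i, hi, hmin⟩ := t'.exists_min_image (f ∘ p) ht'
  rw [mem_filter] at hi
  refine ⟨i, hi.1, (hw₀ i hi.1).lt_of_ne' hi.2, ?_⟩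
  have hmem : t'.centerMass w p ∈ {x ∈ s | f (p i) ≤ f x} :=
    (hf (f (p i))).centerMass_mem (fun j hj => hw₀ j (mem_filter.1 hj).1)
      (by rwa [sum_filter_ne_zero])
      (fun j hj => ⟨hp j (mem_filter.1 hj).1, hmin j hj⟩)
  rw [centerMass_filter_ne_zero] at hmem
  exact hmem.2

theorem EReal.min_le_add_mul (u v : EReal) {a b : ℝ} (ha : 0 ≤ a) (hb : 0 ≤ b)
    (hab : a + b = 1) : min u v ≤ (a : EReal) * u + (b : EReal) * v := by
  have ha' : (0 : EReal) ≤ a := by exact_mod_cast ha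
  have hb' : (0 : EReal) ≤ b := by exact_mod_cast hb
  calc min u v = ((a : EReal) + b) * min u v := by
        rw [← EReal.coe_add, hab, EReal.coe_one, one_mul]
    _ = a * min u v + b * min u v := EReal.right_distrib_of_nonneg ha' hb'
    _ ≤ a * u + b * v := add_le_add (mul_le_mul_of_nonneg_left (min_le_left u v) ha')
        (mul_le_mul_of_nonneg_left (min_le_right u v) hb')

theorem LocallyConcaveOn.quasiconcaveOn {d : ℕ} {w K : Set (Euc d)} {G : Euc d → EReal}
    (hG : LocallyConcaveOn w G) (hK : Convex ℝ K) (hKw : K ⊆ w) : QuasiconcaveOn ℝ K G :=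
  quasiconcaveOn_iff_min_le.2 ⟨hK, fun x hx y hy a b ha hb hab =>
    (EReal.min_le_add_mul _ _ ha hb hab).trans
      (hG x (hKw hx) y (hKw hy) ((hK.segment_subset hx hy).trans hKw) a b ha hb hab)⟩

section Atoms

variable {α : Type*}

theorem measurableSet_measurableAtom_of_finite [MeasurableSpace α]
    (hfin : {s : Set α | MeasurableSet s}.Finite) (x : α) : MeasurableSet (measurableAtom x) := by
  have : measurableAtom x = ⋂ s ∈ {s | x ∈ s ∧ MeasurableSet s}, s := by
    simp only [measurableAtom, Set.mem_ofPred_eq, Set.iInter_and]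
  rw [this]
  exact .biInter (hfin.subset fun _ hs => hs.2).countable fun _ hs => hs.2

theorem eq_empty_or_eq_measurableAtom_of_subset [MeasurableSpace α] {x : α} {t : Set α}
    (ht : MeasurableSet t) (htx : t ⊆ measurableAtom x) :
    t = ∅ ∨ t = measurableAtom x := by
  rcases t.eq_empty_or_nonempty with h | ⟨y, hy⟩
  · exact .inl h
  · exact .inr (htx.antisymm ((measurableAtom_eq_of_mem (htx hy)).symm ▸
      measurableAtom_subset ht hy))

theorem exists_measure_measurableAtom_ne_zero {m m0 : MeasurableSpace α}
    (hfin : {s | MeasurableSet[m] s}.Finite) (μ : @Measure α m0) {s : Set α} (hs : μ s ≠ 0) :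
    ∃ x ∈ s, μ (@measurableAtom α m x) ≠ 0 := by
  by_contra! hnull
  have hcover : s ⊆ ⋃₀ ((@measurableAtom α m) '' s) :=
    fun x hx => ⟨_, ⟨x, hx, rfl⟩, @mem_measurableAtom_self α m x⟩
  have hcount : ((@measurableAtom α m) '' s).Countable :=
    (hfin.subset (by
      rintro _ ⟨x, -, rfl⟩
      exact @measurableSet_measurableAtom_of_finite α m hfin x)).countable
  exact hs (measure_mono_null hcover ((measure_sUnion_null_iff hcount).2
    (by rintro _ ⟨x, hx, rfl⟩; exact hnull x hx)))

end Atoms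

theorem finite_range_of_measurable {α β : Type*} {m : MeasurableSpace α} [MeasurableSpace β]
    [MeasurableSingletonClass β] (hfin : {s | MeasurableSet[m] s}.Finite) {f : α → β}
    (hf : Measurable[m] f) : (Set.range f).Finite := by
  refine Set.Finite.of_finite_image (f := fun y => f ⁻¹' {y})
    (hfin.subset (by rintro _ ⟨y, -, rfl⟩; exact hf (measurableSet_singleton y))) ?_
  rintro _ ⟨a, rfl⟩ _ ⟨b, rfl⟩ hab
  exact (Set.ext_iff.1 hab a).1 rfl

section Fibers

variable {α E : Type*} {f : α → E} {s : Set α} {T : Finset E}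

theorem eq_biUnion_inter_fiber (hT : f '' s ⊆ T) : s = ⋃ y ∈ T, s ∩ f ⁻¹' {y} := by
  rw [← Set.inter_iUnion₂, ← Finset.set_biUnion_coe, Set.biUnion_preimage_singleton, eq_comm,
    Set.inter_eq_left]
  exact Set.image_subset_iff.1 hT

theorem pairwiseDisjoint_inter_fiber (T : Set E) :
    T.PairwiseDisjoint fun y => s ∩ f ⁻¹' {y} :=
  fun y _ z _ hyz => (Set.pairwiseDisjoint_fiber f _ (Set.mem_univ y) (Set.mem_univ z)
    hyz).mono Set.inter_subset_right Set.inter_subset_right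

variable [MeasurableSpace α] {μ : Measure α} [MeasurableSpace E] [MeasurableSingletonClass E]

theorem measureReal_eq_sum_fiber [IsFiniteMeasure μ] (hf : Measurable f) (hs : MeasurableSet s)
    (hT : f '' s ⊆ T) : μ.real s = ∑ y ∈ T, μ.real (s ∩ f ⁻¹' {y}) := by
  conv_lhs => rw [eq_biUnion_inter_fiber hT]
  exact measureReal_biUnion_finset (pairwiseDisjoint_inter_fiber _)
    (fun y _ => hs.inter (hf (measurableSet_singleton y)))

variable [NormedAddCommGroup E] [NormedSpace ℝ E] [CompleteSpace E]

theorem setIntegral_eq_sum_fiber (hf : Measurable f) (hfi : Integrable f μ)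
    (hs : MeasurableSet s) (hT : f '' s ⊆ T) :
    ∫ x in s, f x ∂μ = ∑ y ∈ T, μ.real (s ∩ f ⁻¹' {y}) • y := by
  have hfib : ∀ y ∈ T, MeasurableSet (s ∩ f ⁻¹' {y}) :=
    fun y _ => hs.inter (hf (measurableSet_singleton y))
  conv_lhs => rw [eq_biUnion_inter_fiber hT]
  rw [integral_biUnion_finset T hfib (pairwiseDisjoint_inter_fiber _)
    (fun y _ => hfi.integrableOn)]
  refine Finset.sum_congr rfl fun y hy => ?_
  rw [setIntegral_congr_fun (hfib y hy) (fun x hx => hx.2), setIntegral_const]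

theorem setAverage_eq_centerMass_fiber [IsFiniteMeasure μ] (hf : Measurable f)
    (hfi : Integrable f μ) (hs : MeasurableSet s) (hT : f '' s ⊆ T) :
    ⨍ x in s, f x ∂μ = T.centerMass (fun y => μ.real (s ∩ f ⁻¹' {y})) id := by
  rw [setAverage_eq, setIntegral_eq_sum_fiber hf hfi hs hT, Finset.centerMass,
    ← measureReal_eq_sum_fiber hf hs hT]
  rfl

end Fibers

namespace IsWMart

variable {d : ℕ} {w : Set (Euc d)} {α : Type} {mα : MeasurableSpace α} {μ : Measure α}
  {F : Filtration ℕ mα} {M : ℕ → α → Euc d} {Minf : α → Euc d}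

theorem measurable (hX : IsWMart μ F M Minf w) (n : ℕ) : Measurable (M n) :=
  (hX.2.2.2.1 n).mono (F.le n) le_rfl

theorem setAverage_succ (hX : IsWMart μ F M Minf w) {k : ℕ} {s : Set α}
    (hs : MeasurableSet[F k] s) : ⨍ x in s, M k x ∂μ = ⨍ x in s, M (k + 1) x ∂μ := by
  obtain ⟨hprob, -, -, -, hint, -, hcond, -⟩ := hX
  have hsm : MeasurableSet s := F.le k s hs
  have h_int : ∀ n, MeasurableSet[F n] s → ∫ x in s, M n x ∂μ = ∫ x in s, Minf x ∂μ :=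
    fun n hn => (setIntegral_congr_ae hsm ((hcond n).mono fun _ h _ => h)).trans
      (setIntegral_condExp (F.le n) hint hn)
  rw [setAverage_eq, setAverage_eq, h_int k hs, h_int (k + 1) (F.mono k.le_succ s hs)]

theorem eq_centerMass_fiber (hX : IsWMart μ F M Minf w) {k : ℕ} {a : α}
    (hσ : μ (@measurableAtom α (F k) a) ≠ 0) {T : Finset (Euc d)}
    (hT : M (k + 1) '' @measurableAtom α (F k) a ⊆ T) :
    M k a =
      T.centerMass (fun y => μ.real (@measurableAtom α (F k) a ∩ M (k + 1) ⁻¹' {y})) id := by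
  obtain ⟨hprob, hfin, -, hmeas, -, -, hcond, -⟩ := id hX
  have hσm : MeasurableSet[F k] (@measurableAtom α (F k) a) :=
    @measurableSet_measurableAtom_of_finite α (F k) (hfin k) a
  have hσ_const : ∀ b ∈ @measurableAtom α (F k) a, M k b = M k a := fun b hb =>
    @mem_of_mem_measurableAtom α (F k) a b hb _ (hmeas k (measurableSet_singleton _)) rfl
  rw [← setAverage_eq_centerMass_fiber (hX.measurable (k + 1))
    (integrable_condExp.congr (hcond (k + 1)).symm) (F.le k _ hσm) hT,
    ← hX.setAverage_succ hσm, setAverage_congr_fun (F.le k _ hσm) (.of_forall hσ_const),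
    setAverage_const hσ (measure_ne_top μ _)]

theorem exists_succ_le (hX : IsWMart μ F M Minf w) {G : Euc d → EReal}
    (hG : LocallyConcaveOn w G) {k : ℕ} {s : Set α} {r : EReal} (hμs : μ s ≠ 0)
    (hr : ∀ a ∈ s, G (M k a) ≤ r) : ∃ t, μ t ≠ 0 ∧ ∀ b ∈ t, G (M (k + 1) b) ≤ r := by
  obtain ⟨hprob, hfin, -, hmeas, -, -, -, hhull⟩ := id hX
  obtain ⟨a, has, hσ⟩ := exists_measure_measurableAtom_ne_zero (hfin k) μ hμs
  set σ := @measurableAtom α (F k) a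
  have haσ : a ∈ σ := @mem_measurableAtom_self α (F k) a
  have hσm : MeasurableSet[F k] σ :=
    @measurableSet_measurableAtom_of_finite α (F k) (hfin k) a
  obtain ⟨T, hT⟩ : ∃ T : Finset (Euc d), ↑T = M (k + 1) '' σ :=
    ((finite_range_of_measurable (hfin (k + 1)) (hmeas (k + 1))).subset
      (Set.image_subset_range _ _)).exists_finset_coe
  have hwt_sum : 0 < ∑ y ∈ T, μ.real (σ ∩ M (k + 1) ⁻¹' {y}) := by
    rw [← measureReal_eq_sum_fiber (hX.measurable (k + 1)) (F.le k σ hσm) hT.ge]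
    exact ENNReal.toReal_pos hσ (measure_ne_top μ σ)
  have hK : convexHull ℝ ({M k a} ∪ M (k + 1) '' σ) ⊆ w :=
    hhull k σ hσm ⟨a, haσ⟩
      (fun t ht hts => @eq_empty_or_eq_measurableAtom_of_subset α (F k) a t ht hts) a haσ
  obtain ⟨y, -, hy_pos, hy_le⟩ :=
    (hG.quasiconcaveOn (convex_convexHull ℝ _) hK).exists_le_of_centerMass
      (fun _ _ => measureReal_nonneg) hwt_sum
      (fun y hy => subset_convexHull ℝ _ (Or.inr (hT ▸ Finset.mem_coe.2 hy)))
  refine ⟨σ ∩ M (k + 1) ⁻¹' {y}, fun h => hy_pos.ne' (by simp [Measure.real, h]), ?_⟩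
  rintro b ⟨-, rfl⟩
  exact hy_le.trans (hX.eq_centerMass_fiber hσ hT.ge ▸ hr a has)

theorem exists_le_of_start (hX : IsWMart μ F M Minf w) {G : Euc d → EReal}
    (hG : LocallyConcaveOn w G) {x : Euc d} (h0 : ∀ a, M 0 a = x) (n : ℕ) :
    ∃ a, G (M n a) ≤ G x := by
  have hprob := hX.1
  suffices ∃ s, μ s ≠ 0 ∧ ∀ a ∈ s, G (M n a) ≤ G x by
    obtain ⟨s, hμs, hs⟩ := this
    obtain ⟨a, ha⟩ := nonempty_of_measure_ne_zero hμs
    exact ⟨a, hs a ha⟩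
  induction n with
  | zero => exact ⟨Set.univ, by simp, fun a _ => by rw [h0]⟩
  | succ k ih =>
    obtain ⟨s, hμs, hs⟩ := ih
    exact hX.exists_succ_le hG hμs hs

end IsWMart

theorem fixedBoundary_subset_closure {d : ℕ} (w : Set (Euc d)) :
    fixedBoundary w ⊆ closure w :=
  fun _ hx => frontier_subset_closure hx.1

/-- **Minimal principle.** Let `w ⊆ ℝ^d` be a strongly martingale connected
closed set. Then for every locally concave `G : w → ℝ ∪ {+∞}`,
`inf_{x ∈ w} G(x) = inf_{x ∈ ∂_fixed w} G(x)`. -/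
theorem stmt5 {d : ℕ} (w : Set (Euc d)) (hw : IsClosed w)
    (hconn : StronglyMartingaleConnected w) (G : Euc d → EReal)
    (hG : LocallyConcaveOn w G) :
    ⨅ x ∈ w, G x = ⨅ x ∈ fixedBoundary w, G x := by
  refine le_antisymm (le_iInf₂ fun x hx => iInf₂_le x ?_) (le_iInf₂ fun x hx => ?_)
  · exact hw.closure_eq ▸ fixedBoundary_subset_closure w hx
  obtain ⟨X, ⟨n, hn⟩, h0⟩ := hconn x hx
  obtain ⟨a, ha⟩ := X.isWMart.exists_le_of_start hG h0 n
  obtain ⟨-, -, -, -, -, hfixed, -, -⟩ := X.isWMart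
  calc ⨅ y ∈ fixedBoundary w, G y ≤ G (X.Minf a) := iInf₂_le _ (hfixed a)
    _ = G (X.M n a) := by rw [hn]
    _ ≤ G x := ha
end
end

section
/- For any open convex set Ω₀ ⊆ ℝ² that does not contain any line and any δ > 0, there exists a C²-smooth function E_δ defined on an open set containing cl Ω₀ whose Hessian is strictly negative definite at every point of cl Ω₀ (in particular E_δ is strictly concave there) and which satisfies 0 < E_δ(x) < δ for every x ∈ cl Ω₀. -/
/-!
The directions `d` whose rays from a point of `Ω₀` stay in `cl Ω₀` form a closed convex cone
`K`, which is pointed because `Ω₀` contains no line. So the dual cone `K*` has interior points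
`y`, and `⟪y, d⟫ > 0` for every nonzero `d ∈ K`. By compactness of the unit sphere, a linear
functional that is unbounded above on `Ω₀` is nonnegative on some nonzero `d ∈ K`; hence every
`u` in the open set `-interior K*` is bounded above on `Ω₀`. Pick finitely many such `u i`, with
bounds `M i` on `cl Ω₀` and no common orthogonal vector. The average of
`δ (1 - exp (⟪u i, x⟫ - M i))` then takes values in `(0, δ)` on `cl Ω₀`, and its second
derivative in direction `v` is `-(δ / n) ∑ ⟪u i, v⟫² exp (⟪u i, x⟫ - M i) < 0`.
-/

open Set

noncomputable section

def ContainsNoLine (s : Set (Euc 2)) : Prop :=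
  ¬ ∃ x v : Euc 2, v ≠ 0 ∧ ∀ t : ℝ, x + t • v ∈ s

open scoped RealInnerProductSpace

section

variable {F : Type*} [NormedAddCommGroup F] [InnerProductSpace ℝ F]

def recessionCone (C : Set F) (x : F) : Set F := {d | ∀ t : ℝ, 0 ≤ t → x + t • d ∈ C}

theorem Convex.add_smul_mem_of_le {C : Set F} (hC : Convex ℝ C) {x d : F} {t R : ℝ}
    (hx : x ∈ C) (hR : x + R • d ∈ C) (ht : 0 ≤ t) (htR : t ≤ R) : x + t • d ∈ C := by
  rcases ht.eq_or_lt with rfl | ht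
  · simpa using hx
  have hRpos : 0 < R := ht.trans_le htR
  have := hC.add_smul_mem hx hR ⟨div_nonneg ht.le hRpos.le, (div_le_one hRpos).2 htR⟩
  rwa [smul_smul, div_mul_cancel₀ t hRpos.ne'] at this

theorem exists_properCone_eq_recessionCone {C : Set F} (hC : IsClosed C) (hconv : Convex ℝ C)
    {x : F} (hx : x ∈ C) : ∃ K : ProperCone ℝ F, (K : Set F) = recessionCone C x := by
  refine ⟨{ carrier := recessionCone C x
            zero_mem' := fun t _ => by simpa using hx
            add_mem' := fun {v w} hv hw t ht => ?_
            smul_mem' := fun c v hv t ht => ?_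
            isClosed' := ?_ }, rfl⟩
  · have := hconv (hv (2 * t) (by linarith)) (hw (2 * t) (by linarith))
      (by norm_num : (0:ℝ) ≤ 1/2) (by norm_num : (0:ℝ) ≤ 1/2) (by norm_num)
    convert this using 1
    module
  · have := hv (t * c) (mul_nonneg ht c.2)
    rwa [mul_smul] at this
  · have : recessionCone C x = ⋂ t ≥ (0 : ℝ), (fun d => x + t • d) ⁻¹' C := by
      ext d; simp [recessionCone]
    change IsClosed (recessionCone C x)
    rw [this]
    exact isClosed_iInter fun t => isClosed_iInter fun _ =>
      hC.preimage (continuous_const.add (continuous_const_smul t))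

theorem Convex.add_smul_mem_of_mem_recessionCone_neg {Ω : Set F} (hΩ : IsOpen Ω)
    (hconv : Convex ℝ Ω) {x v : F} (hx : x ∈ Ω) (hv : v ∈ recessionCone (closure Ω) x)
    (hnv : -v ∈ recessionCone (closure Ω) x) (t : ℝ) : x + t • v ∈ Ω := by
  have hcl : x + (2 * t) • v ∈ closure Ω := by
    rcases le_or_gt 0 t with ht | ht
    · exact hv (2 * t) (by linarith)
    · simpa using hnv (-(2 * t)) (by linarith)
  -- `x + t • v` is the midpoint of an interior point and a point of the closure
  have := hconv.combo_interior_closure_mem_interior (hΩ.interior_eq.symm ▸ hx) hcl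
    (by norm_num : (0:ℝ) < 1/2) (by norm_num : (0:ℝ) ≤ 1/2) (by norm_num)
  rw [hΩ.interior_eq] at this
  convert this using 1
  module

theorem exists_mem_recessionCone_of_not_bddAbove [FiniteDimensional ℝ F] {C : Set F}
    (hC : IsClosed C) (hconv : Convex ℝ C) {x u : F} (hx : x ∈ C)
    (hu : ¬ BddAbove ((fun y => ⟪u, y⟫) '' C)) :
    ∃ d ∈ recessionCone C x, d ≠ 0 ∧ 0 ≤ ⟪u, d⟫ := by
  set A : ℕ → Set F := fun n =>
    Metric.sphere 0 1 ∩ {d | 0 ≤ ⟪u, d⟫} ∩ {d | x + (n : ℝ) • d ∈ C}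
  have hA_closed : ∀ n, IsClosed (A n) := fun n =>
    (Metric.isClosed_sphere.inter (isClosed_le continuous_const (by fun_prop))).inter
      (hC.preimage (by fun_prop))
  have hA_antitone : ∀ n, A (n + 1) ⊆ A n := fun n d ⟨hd, hdC⟩ =>
    ⟨hd, hconv.add_smul_mem_of_le hx hdC n.cast_nonneg (by simp)⟩
  have hA_nonempty : ∀ n, (A n).Nonempty := by
    intro n
    obtain ⟨_, ⟨z, hz, rfl⟩, hlt⟩ := not_bddAbove_iff.1 hu (⟪u, x⟫ + n * ‖u‖)
    have hlt' : ‖u‖ * n < ⟪u, z - x⟫ := by rw [inner_sub_right]; linarith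
    have hfar : (n : ℝ) < ‖z - x‖ := lt_of_mul_lt_mul_left
      (hlt'.trans_le (real_inner_le_norm u (z - x))) (norm_nonneg u)
    have hpos : 0 < ‖z - x‖ := n.cast_nonneg.trans_lt hfar
    refine ⟨‖z - x‖⁻¹ • (z - x), ⟨?_, ?_⟩, ?_⟩
    · simp [norm_smul, hpos.ne']
    · show 0 ≤ ⟪u, _⟫
      rw [real_inner_smul_right]
      exact mul_nonneg (inv_nonneg.2 hpos.le) ((by positivity : 0 ≤ ‖u‖ * n).trans hlt'.le)
    · refine hconv.add_smul_mem_of_le hx ?_ n.cast_nonneg hfar.le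
      simpa [smul_smul, hpos.ne'] using hz
  obtain ⟨d, hd⟩ := IsCompact.nonempty_iInter_of_sequence_nonempty_isCompact_isClosed A
    hA_antitone hA_nonempty
    ((isCompact_sphere 0 1).of_isClosed_subset (hA_closed 0) fun _ hd => hd.1.1) hA_closed
  rw [mem_iInter] at hd
  refine ⟨d, fun t ht => ?_, ?_, (hd 0).1.2⟩
  · obtain ⟨n, hn⟩ := exists_nat_ge t
    exact hconv.add_smul_mem_of_le hx (hd n).2 ht hn
  · rintro rfl
    simpa using (hd 0).1.1

theorem ProperCone.inner_pos_of_mem_interior_innerDual [CompleteSpace F] {s : Set F} {y d : F}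
    (hy : y ∈ interior (ProperCone.innerDual s : Set F)) (hd : d ∈ s) (hd0 : d ≠ 0) :
    0 < ⟪d, y⟫ := by
  obtain ⟨ε, hε, hball⟩ := Metric.isOpen_iff.1 isOpen_interior y hy
  have hdn : 0 < ‖d‖ := norm_pos_iff.2 hd0
  have hmem : y - (ε / (2 * ‖d‖)) • d ∈ (ProperCone.innerDual s : Set F) := by
    refine interior_subset (hball ?_)
    rw [Metric.mem_ball, dist_eq_norm, sub_sub_cancel_left, norm_neg, norm_smul,
      Real.norm_of_nonneg (by positivity)]
    field_simp
    linarith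
  have := ProperCone.mem_innerDual.1 hmem hd
  rw [inner_sub_right, real_inner_smul_right, real_inner_self_eq_norm_sq] at this
  have hεd : ε / (2 * ‖d‖) * ‖d‖ ^ 2 = ε * ‖d‖ / 2 := by field_simp
  nlinarith

theorem ProperCone.interior_innerDual_nonempty [FiniteDimensional ℝ F] (K : ProperCone ℝ F)
    (hK : ∀ v ∈ K, -v ∈ K → v = 0) :
    (interior (ProperCone.innerDual (K : Set F) : Set F)).Nonempty := by
  set D : Set F := SetLike.coe (ProperCone.innerDual (K : Set F))
  by_contra hint
  have hspan : Submodule.span ℝ D ≠ ⊤ := by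
    intro htop
    apply hint
    rw [(ProperCone.innerDual _).convex.interior_nonempty_iff_affineSpan_eq_top,
      AffineSubspace.affineSpan_eq_top_iff_vectorSpan_eq_top_of_nonempty ℝ F F
        ⟨0, zero_mem _⟩,
      vectorSpan_eq_span_vsub_set_right ℝ (zero_mem _)]
    simpa using htop
  obtain ⟨v, hv, hv0⟩ := (Submodule.ne_bot_iff _).1 (mt Submodule.orthogonal_eq_bot_iff.1 hspan)
  -- a vector orthogonal to the dual lies in the double dual, which is `K`
  have hmem : ∀ w, (∀ y ∈ D, ⟪y, w⟫ = 0) → w ∈ K := fun w hw => by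
    rw [← ProperCone.innerDual_innerDual K]
    exact ProperCone.mem_innerDual.2 fun y hy => (hw y hy).ge
  have horth : ∀ y ∈ D, ⟪y, v⟫ = 0 := fun y hy =>
    Submodule.inner_right_of_mem_orthogonal (Submodule.subset_span hy) hv
  exact hv0 (hK v (hmem v horth)
    (hmem (-v) fun y hy => by rw [inner_neg_right, horth y hy, neg_zero]))

theorem exists_isOpen_bddAbove_inner [FiniteDimensional ℝ F] {Ω : Set F} (hΩ : IsOpen Ω)
    (hconv : Convex ℝ Ω) (hline : ∀ x v, (∀ t : ℝ, x + t • v ∈ Ω) → v = 0) :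
    ∃ U : Set F, IsOpen U ∧ U.Nonempty ∧ ∀ u ∈ U, BddAbove ((fun x => ⟪u, x⟫) '' Ω) := by
  rcases Ω.eq_empty_or_nonempty with rfl | ⟨x₀, hx₀⟩
  · exact ⟨univ, isOpen_univ, univ_nonempty, by simp⟩
  obtain ⟨K, hK⟩ := exists_properCone_eq_recessionCone isClosed_closure hconv.closure
    (subset_closure hx₀)
  have hK_pointed : ∀ v ∈ K, -v ∈ K → v = 0 := fun v hv hnv =>
    hline x₀ v (hconv.add_smul_mem_of_mem_recessionCone_neg hΩ hx₀
      (by rwa [← hK]) (by rwa [← hK]))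
  refine ⟨-interior (ProperCone.innerDual (K : Set F) : Set F), isOpen_interior.neg,
    (K.interior_innerDual_nonempty hK_pointed).neg, fun u hu => ?_⟩
  refine BddAbove.mono (image_mono subset_closure) (not_not.1 fun hnb => ?_)
  obtain ⟨d, hdK, hd0, hud⟩ := exists_mem_recessionCone_of_not_bddAbove isClosed_closure
    hconv.closure (subset_closure hx₀) hnb
  have := ProperCone.inner_pos_of_mem_interior_innerDual hu (hK ▸ hdK) hd0
  rw [inner_neg_right, real_inner_comm] at this
  linarith

theorem IsOpen.exists_family_inner_eq_zero_imp [FiniteDimensional ℝ F] {U : Set F}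
    (hU : IsOpen U) (hne : U.Nonempty) :
    ∃ u : Option (Fin (Module.finrank ℝ F)) → F, (∀ i, u i ∈ U) ∧
      ∀ v, (∀ i, ⟪u i, v⟫ = 0) → v = 0 := by
  obtain ⟨u₀, hu₀⟩ := hne
  obtain ⟨ε, hε, hball⟩ := Metric.isOpen_iff.1 hU u₀ hu₀
  set b := stdOrthonormalBasis ℝ F
  refine ⟨fun i => i.elim u₀ fun j => u₀ + (ε / 2) • b j, fun i => ?_, fun v hv => ?_⟩
  · cases i with
    | none => exact hu₀
    | some j =>
      refine hball ?_
      simp [dist_eq_norm, norm_smul, abs_of_pos hε]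
      linarith
  · refine b.repr.injective ?_
    ext j
    have h := hv (some j)
    have h₀ : ⟪u₀, v⟫ = 0 := hv none
    simp only [Option.elim, inner_add_left, h₀, real_inner_smul_left, zero_add] at h
    simp [b.repr_apply_apply, (mul_eq_zero.1 h).resolve_left (by positivity)]

variable {ι : Type*} [Fintype ι]

def expBarrier (δ : ℝ) (u : ι → F) (M : ι → ℝ) (x : F) : ℝ :=
  δ / Fintype.card ι * ∑ i, (1 - Real.exp (⟪u i, x⟫ - M i))

theorem contDiff_expBarrier (δ : ℝ) (u : ι → F) (M : ι → ℝ) {n : WithTop ℕ∞} :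
    ContDiff ℝ n (expBarrier δ u M) :=
  contDiff_const.mul <| ContDiff.sum fun _ _ =>
    contDiff_const.sub ((contDiff_const.inner ℝ contDiff_id).sub contDiff_const).exp

theorem hasDerivAt_exp_inner_line (u x v : F) (m t : ℝ) :
    HasDerivAt (fun t : ℝ => Real.exp (⟪u, x + t • v⟫ - m))
      (⟪u, v⟫ * Real.exp (⟪u, x + t • v⟫ - m)) t := by
  have : HasDerivAt (fun t : ℝ => ⟪u, x + t • v⟫ - m) ⟪u, v⟫ t := by
    simp only [inner_add_right, real_inner_smul_right]
    simpa using ((hasDerivAt_id t).mul_const ⟪u, v⟫).const_add ⟪u, x⟫ |>.sub_const m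
  simpa [mul_comm] using this.exp

theorem deriv_deriv_expBarrier_line (δ : ℝ) (u : ι → F) (M : ι → ℝ) (x v : F) :
    deriv (deriv fun t : ℝ => expBarrier δ u M (x + t • v)) 0 =
      -(δ / Fintype.card ι) * ∑ i, ⟪u i, v⟫ ^ 2 * Real.exp (⟪u i, x⟫ - M i) := by
  set e : ι → ℝ → ℝ := fun i t => Real.exp (⟪u i, x + t • v⟫ - M i)
  have h₁ : ∀ t, HasDerivAt (fun t : ℝ => expBarrier δ u M (x + t • v))
      (δ / Fintype.card ι * ∑ i, -(⟪u i, v⟫ * e i t)) t := fun t =>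
    (HasDerivAt.fun_sum fun i _ =>
      (hasDerivAt_exp_inner_line (u i) x v (M i) t).const_sub 1).const_mul _
  have h₂ : HasDerivAt (fun t : ℝ => δ / Fintype.card ι * ∑ i, -(⟪u i, v⟫ * e i t))
      (δ / Fintype.card ι * ∑ i, -(⟪u i, v⟫ * (⟪u i, v⟫ * e i 0))) 0 :=
    (HasDerivAt.fun_sum fun i _ =>
      ((hasDerivAt_exp_inner_line (u i) x v (M i) 0).const_mul ⟪u i, v⟫).neg).const_mul _
  rw [funext fun t => (h₁ t).deriv, h₂.deriv]
  simp only [e, zero_smul, add_zero, Finset.sum_neg_distrib, ← mul_assoc, ← sq]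
  ring

theorem expBarrier_mem_Ioo [Nonempty ι] {δ : ℝ} (hδ : 0 < δ) {u : ι → F} {M : ι → ℝ}
    {x : F} (hx : ∀ i, ⟪u i, x⟫ < M i) : expBarrier δ u M x ∈ Ioo 0 δ := by
  have hterm : ∀ i, 1 - Real.exp (⟪u i, x⟫ - M i) ∈ Ioo 0 1 := fun i =>
    ⟨by simpa using Real.exp_lt_one_iff.2 (sub_neg.2 (hx i)), by simpa using Real.exp_pos _⟩
  have hcard : (0 : ℝ) < Fintype.card ι := by exact_mod_cast Fintype.card_pos
  have hsum_pos : 0 < ∑ i, (1 - Real.exp (⟪u i, x⟫ - M i)) :=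
    Finset.sum_pos (fun i _ => (hterm i).1) Finset.univ_nonempty
  have hsum_lt : ∑ i, (1 - Real.exp (⟪u i, x⟫ - M i)) < Fintype.card ι := by
    simpa using Finset.sum_lt_sum_of_nonempty Finset.univ_nonempty fun i _ => (hterm i).2
  refine ⟨by unfold expBarrier; positivity, ?_⟩
  calc expBarrier δ u M x < δ / Fintype.card ι * Fintype.card ι := by
        unfold expBarrier; gcongr
    _ = δ := div_mul_cancel₀ δ hcard.ne'

theorem deriv_deriv_expBarrier_line_neg [Nonempty ι] {δ : ℝ} (hδ : 0 < δ) (u : ι → F)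
    (M : ι → ℝ) (x : F) {v : F} (hv : ∃ i, ⟪u i, v⟫ ≠ 0) :
    deriv (deriv fun t : ℝ => expBarrier δ u M (x + t • v)) 0 < 0 := by
  obtain ⟨i, hi⟩ := hv
  rw [deriv_deriv_expBarrier_line]
  have hcard : (0 : ℝ) < Fintype.card ι := by exact_mod_cast Fintype.card_pos
  have : 0 < ∑ i, ⟪u i, v⟫ ^ 2 * Real.exp (⟪u i, x⟫ - M i) :=
    Finset.sum_pos' (fun j _ => by positivity) ⟨i, Finset.mem_univ i, by positivity⟩
  have : 0 < δ / Fintype.card ι := by positivity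
  nlinarith

end

/-- For any open convex set `Ω₀ ⊆ ℝ²` that contains no line and any
`δ > 0`, there is a `C²`-smooth function `E_δ` defined on an open set containing `cl Ω₀`
whose Hessian is strictly negative definite at every point of `cl Ω₀` (the second derivative
in every nonzero direction is negative), and which satisfies `0 < E_δ < δ` on `cl Ω₀`. -/
theorem stmt19 (Ω₀ : Set (Euc 2)) (h0open : IsOpen Ω₀) (h0conv : Convex ℝ Ω₀)
    (h0line : ContainsNoLine Ω₀) (δ : ℝ) (hδ : 0 < δ) :
    ∃ (U : Set (Euc 2)) (Eδ : Euc 2 → ℝ), IsOpen U ∧ closure Ω₀ ⊆ U ∧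
      ContDiffOn ℝ 2 Eδ U ∧
      (∀ x ∈ closure Ω₀, ∀ v : Euc 2, v ≠ 0 →
        deriv (deriv fun t : ℝ => Eδ (x + t • v)) 0 < 0) ∧
      (∀ x ∈ closure Ω₀, 0 < Eδ x ∧ Eδ x < δ) := by
  obtain ⟨U, hU_open, hU_nonempty, hU_bdd⟩ := exists_isOpen_bddAbove_inner h0open h0conv
    fun x v hline => not_not.1 fun hv => h0line ⟨x, v, hv, hline⟩
  obtain ⟨u, huU, hu⟩ := hU_open.exists_family_inner_eq_zero_imp hU_nonempty
  choose M hM using fun i => hU_bdd (u i) (huU i)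
  have hle : ∀ x ∈ closure Ω₀, ∀ i, ⟪u i, x⟫ ≤ M i := fun x hx i =>
    closure_minimal (t := {z | ⟪u i, z⟫ ≤ M i}) (fun z hz => hM i ⟨z, hz, rfl⟩)
      (isClosed_le (by fun_prop) continuous_const) hx
  refine ⟨univ, expBarrier δ u (M · + 1), isOpen_univ, subset_univ _,
    contDiff_expBarrier δ u _ |>.contDiffOn, fun x _ v hv => ?_,
    fun x hx => expBarrier_mem_Ioo hδ fun i => (hle x hx i).trans_lt (lt_add_one _)⟩
  refine deriv_deriv_expBarrier_line_neg hδ u _ x ?_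
  by_contra! h
  exact hv (hu v h)
end
end
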